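/- arXiv:2005.13505 — 2 statements merged into one kernel-verified Lean document; each statement's English description precedes it below -/
import Mathlib

section
/- Definitions D1 and D2 of the box distance agree: for metric measure spaces X = (X,d,μ) and X' = (X',d',μ') and ε > 0, there exist measure-preserving maps φ: ([0,1], Leb) → (X,μ) and φ': ([0,1], Leb) → (X',μ') and a set W ⊆ [0,1] with Leb(W) ≤ aε such that |d(φ(x₁),φ(x₂)) − d'(φ'(x₁),φ'(x₂))| ≤ ε for all x₁, x₂ ∈ [0,1] \ W, if and only if there exist a Borel relation R ⊆ X × X' and a coupling ν of μ and μ' with ν(R) ≥ 1 − aε such that (x₁,x₁'), (x₂,x₂') ∈ R implies |d(x₁,x₂) − d'(x₁',x₂')| ≤ ε. -/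
/-!
Pushing Lebesgue measure on `[0,1]` forward along `t ↦ (φ t, φ' t)` gives a coupling; as relation
take the closure of the image of `[0,1] \ W`, which is Borel, and to which the distortion bound
passes by continuity. Conversely, a coupling `ν` on the standard Borel space `X × X'` is the image
of Lebesgue measure on `[0,1]` under some measurable `ψ`, and `W = [0,1] \ ψ⁻¹' R` works.
-/

open MeasureTheory Metric

open Set unitInterval in
theorem unitInterval.measurePreserving_projIcc :
    MeasurePreserving (projIcc (0 : ℝ) 1 zero_le_one) (volume.restrict I) volume := by
  refine ⟨continuous_projIcc.measurable, ?_⟩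
  rw [← measurePreserving_coe.map_eq, Measure.map_map continuous_projIcc.measurable
    measurable_subtype_coe]
  simp [Function.comp_def, projIcc_val]

theorem MeasureTheory.Measure.exists_measurePreserving_restrict_Icc {Y : Type*}
    [MeasurableSpace Y] [StandardBorelSpace Y] (ν : Measure Y) [IsProbabilityMeasure ν] :
    ∃ ψ : ℝ → Y, MeasurePreserving ψ (volume.restrict (Set.Icc (0 : ℝ) 1)) ν := by
  have := nonempty_of_isProbabilityMeasure ν
  obtain ⟨f, hf, hf_map⟩ := ν.exists_measurable_map_eq
  exact ⟨f ∘ Set.projIcc 0 1 zero_le_one,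
    MeasurePreserving.comp ⟨hf, hf_map⟩ unitInterval.measurePreserving_projIcc⟩

section Distortion

variable {X X' : Type*} [PseudoMetricSpace X] [PseudoMetricSpace X'] {ε : ℝ}

theorem abs_dist_sub_dist_le_of_mem_closure {S : Set (X × X')}
    (hS : ∀ p ∈ S, ∀ q ∈ S, |dist p.1 q.1 - dist p.2 q.2| ≤ ε) :
    ∀ p ∈ closure S, ∀ q ∈ closure S, |dist p.1 q.1 - dist p.2 q.2| ≤ ε := by
  let T : Set ((X × X') × (X × X')) := {pq | |dist pq.1.1 pq.2.1 - dist pq.1.2 pq.2.2| ≤ ε}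
  have hT : closure S ×ˢ closure S ⊆ T := closure_prod_eq (s := S) (t := S) ▸
    closure_minimal (fun pq hpq => hS _ hpq.1 _ hpq.2) (isClosed_le (by fun_prop) continuous_const)
  exact fun p hp q hq => hT (Set.mk_mem_prod hp hq)

variable [MeasurableSpace X] [OpensMeasurableSpace X] [MeasurableSpace X']
  [OpensMeasurableSpace X'] [SecondCountableTopologyEither X X']

theorem exists_coupling_of_measurePreserving {Ω : Type*} [MeasurableSpace Ω] {m : Measure Ω}
    {μ : Measure X} {μ' : Measure X'} [IsProbabilityMeasure μ]
    {φ : Ω → X} {φ' : Ω → X'} (hφ : MeasurePreserving φ m μ) (hφ' : MeasurePreserving φ' m μ')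
    {S : Set Ω} (hS : ∀ x₁ ∈ S, ∀ x₂ ∈ S, |dist (φ x₁) (φ x₂) - dist (φ' x₁) (φ' x₂)| ≤ ε) :
    ∃ (R : Set (X × X')) (ν : Measure (X × X')),
      MeasurableSet R ∧ IsProbabilityMeasure ν ∧
      ν.map Prod.fst = μ ∧ ν.map Prod.snd = μ' ∧ m S ≤ ν R ∧
      ∀ p ∈ R, ∀ q ∈ R, |dist p.1 q.1 - dist p.2 q.2| ≤ ε := by
  set F : Ω → X × X' := fun t => (φ t, φ' t)
  have hF : Measurable F := hφ.measurable.prodMk hφ'.measurable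
  have hfst : (m.map F).map Prod.fst = μ := by
    rw [Measure.map_map measurable_fst hF]; exact hφ.map_eq
  have hsnd : (m.map F).map Prod.snd = μ' := by
    rw [Measure.map_map measurable_snd hF]; exact hφ'.map_eq
  have : IsProbabilityMeasure ((m.map F).map Prod.fst) := hfst ▸ inferInstance
  refine ⟨closure (F '' S), m.map F, isClosed_closure.measurableSet,
    Measure.isProbabilityMeasure_of_map Prod.fst, hfst, hsnd, ?_,
    abs_dist_sub_dist_le_of_mem_closure ?_⟩
  · rw [Measure.map_apply hF isClosed_closure.measurableSet]
    exact measure_mono fun t ht => subset_closure (Set.mem_image_of_mem F ht)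
  · rintro _ ⟨t₁, ht₁, rfl⟩ _ ⟨t₂, ht₂, rfl⟩
    exact hS t₁ ht₁ t₂ ht₂

end Distortion

theorem stmt5_general {X X' : Type*}
    [MetricSpace X] [CompleteSpace X] [TopologicalSpace.SeparableSpace X]
    [MeasurableSpace X] [BorelSpace X]
    [MetricSpace X'] [CompleteSpace X'] [TopologicalSpace.SeparableSpace X']
    [MeasurableSpace X'] [BorelSpace X']
    (μ : Measure X) (μ' : Measure X')
    [IsProbabilityMeasure μ] [IsProbabilityMeasure μ']
    (a ε : ℝ) :
    (∃ (φ : ℝ → X) (φ' : ℝ → X') (W : Set ℝ),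
      MeasurePreserving φ (volume.restrict (Set.Icc (0:ℝ) 1)) μ ∧
      MeasurePreserving φ' (volume.restrict (Set.Icc (0:ℝ) 1)) μ' ∧
      W ⊆ Set.Icc (0:ℝ) 1 ∧ volume W ≤ ENNReal.ofReal (a * ε) ∧
      ∀ x₁ ∈ Set.Icc (0:ℝ) 1 \ W, ∀ x₂ ∈ Set.Icc (0:ℝ) 1 \ W,
        |dist (φ x₁) (φ x₂) - dist (φ' x₁) (φ' x₂)| ≤ ε) ↔
    (∃ (R : Set (X × X')) (ν : Measure (X × X')),
      MeasurableSet R ∧ IsProbabilityMeasure ν ∧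
      ν.map Prod.fst = μ ∧ ν.map Prod.snd = μ' ∧
      1 - ENNReal.ofReal (a * ε) ≤ ν R ∧
      ∀ p ∈ R, ∀ q ∈ R, |dist p.1 q.1 - dist p.2 q.2| ≤ ε) := by
  have : IsProbabilityMeasure (volume.restrict (Set.Icc (0:ℝ) 1)) := ⟨by simp⟩
  constructor
  · rintro ⟨φ, φ', W, hφ, hφ', -, hW, hdist⟩
    obtain ⟨R, ν, hR, hν, hfst, hsnd, hνR, hRdist⟩ :=
      exists_coupling_of_measurePreserving hφ hφ' hdist
    refine ⟨R, ν, hR, hν, hfst, hsnd, le_trans ?_ hνR, hRdist⟩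
    calc 1 - ENNReal.ofReal (a * ε) ≤ volume (Set.Icc (0:ℝ) 1) - volume W := by
          simpa using tsub_le_tsub_left hW 1
      _ ≤ volume (Set.Icc (0:ℝ) 1 \ W) := le_measure_sdiff
      _ = volume.restrict (Set.Icc (0:ℝ) 1) (Set.Icc 0 1 \ W) := by
          rw [Measure.restrict_apply' measurableSet_Icc, Set.inter_eq_left.mpr Set.sdiff_subset]
  · rintro ⟨R, ν, hR, hν, hfst, hsnd, hνR, hRdist⟩
    obtain ⟨ψ, hψ⟩ := ν.exists_measurePreserving_restrict_Icc
    have hψR : MeasurableSet (ψ ⁻¹' R) := hψ.measurable hR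
    refine ⟨fun t => (ψ t).1, fun t => (ψ t).2, Set.Icc 0 1 \ ψ ⁻¹' R,
      MeasurePreserving.comp ⟨measurable_fst, hfst⟩ hψ,
      MeasurePreserving.comp ⟨measurable_snd, hsnd⟩ hψ, Set.sdiff_subset, ?_, ?_⟩
    · calc volume (Set.Icc 0 1 \ ψ ⁻¹' R) = volume.restrict (Set.Icc (0:ℝ) 1) (ψ ⁻¹' R)ᶜ := by
            rw [Measure.restrict_apply hψR.compl, Set.sdiff_eq_compl_inter]
        _ = 1 - ν R := by rw [prob_compl_eq_one_sub hψR, hψ.measure_preimage hR.nullMeasurableSet]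
        _ ≤ ENNReal.ofReal (a * ε) := tsub_le_iff_tsub_le.mp hνR
    · rintro x₁ ⟨hx₁, hx₁R⟩ x₂ ⟨hx₂, hx₂R⟩
      exact hRdist _ (of_not_not fun h => hx₁R ⟨hx₁, h⟩) _ (of_not_not fun h => hx₂R ⟨hx₂, h⟩)

/-- Definitions D1 and D2 of the box distance agree, for a fixed `ε`. -/
theorem stmt5 {X X' : Type*}
    [MetricSpace X] [CompleteSpace X] [TopologicalSpace.SeparableSpace X]
    [MeasurableSpace X] [BorelSpace X]
    [MetricSpace X'] [CompleteSpace X'] [TopologicalSpace.SeparableSpace X']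
    [MeasurableSpace X'] [BorelSpace X']
    (μ : Measure X) (μ' : Measure X')
    [IsProbabilityMeasure μ] [IsProbabilityMeasure μ']
    (a ε : ℝ) (ha : 0 < a) (hε : 0 < ε) :
    (∃ (φ : ℝ → X) (φ' : ℝ → X') (W : Set ℝ),
      MeasurePreserving φ (volume.restrict (Set.Icc (0:ℝ) 1)) μ ∧
      MeasurePreserving φ' (volume.restrict (Set.Icc (0:ℝ) 1)) μ' ∧
      W ⊆ Set.Icc (0:ℝ) 1 ∧ volume W ≤ ENNReal.ofReal (a * ε) ∧
      ∀ x₁ ∈ Set.Icc (0:ℝ) 1 \ W, ∀ x₂ ∈ Set.Icc (0:ℝ) 1 \ W,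
        |dist (φ x₁) (φ x₂) - dist (φ' x₁) (φ' x₂)| ≤ ε) ↔
    (∃ (R : Set (X × X')) (ν : Measure (X × X')),
      MeasurableSet R ∧ IsProbabilityMeasure ν ∧
      ν.map Prod.fst = μ ∧ ν.map Prod.snd = μ' ∧
      1 - ENNReal.ofReal (a * ε) ≤ ν R ∧
      ∀ p ∈ R, ∀ q ∈ R, |dist p.1 q.1 - dist p.2 q.2| ≤ ε) :=
  stmt5_general μ μ' a ε
end

section
/- For any complete separable metric measure spaces X and X' and any a > 0, the box distance with parameter a equals twice the Gromov–Prohorov distance with parameter 2a: □_a(X,X') = 2·d_GP^{2a}(X,X'). -/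
/-!
If a relation `R` and a coupling `ν` witness `□_a(X, X') ≤ ε`, glue `X` and `X'` along `R`, putting
each pair of `R` at distance `ε / 2`: the images of `μ` and `μ'` are then `ε / 2`-close in the
Prohorov distance with parameter `2a`, the defect being `ν Rᶜ ≤ aε`.

Conversely, let `X, X'` sit isometrically in `Z` with images `δ`-close for the Prohorov distance
with parameter `2a`. The relation `d(φ x, φ' x') ≤ δ + ζ/2` has distortion at most `2δ + ζ`, and a
Strassen-type argument produces a coupling giving it mass `≥ 1 - a(2δ + ζ)`: cut `X` and `X'` into
finitely many small cells carrying almost all the mass; the Prohorov bound turns into a Hall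
condition with deficiency `2aδ` between the cell masses; Hall's marriage theorem, after rescaling
and rounding, yields a transport plan between the cells, which is spread over products of cells.
-/

open MeasureTheory Metric

universe u v

/-- The box distance `□_a` (Definition D2). -/
noncomputable def boxDist {X : Type u} {X' : Type v}
    [MetricSpace X] [MeasurableSpace X] [MetricSpace X'] [MeasurableSpace X']
    (a : ℝ) (μ : Measure X) (μ' : Measure X') : ℝ :=
  sInf {ε : ℝ | 0 < ε ∧ ∃ (R : Set (X × X')) (ν : Measure (X × X')),
    MeasurableSet R ∧ IsProbabilityMeasure ν ∧
    ν.map Prod.fst = μ ∧ ν.map Prod.snd = μ' ∧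
    1 - ENNReal.ofReal (a * ε) ≤ ν R ∧
    ∀ p ∈ R, ∀ q ∈ R, |dist p.1 q.1 - dist p.2 q.2| ≤ ε}

/-- The Prohorov distance with parameter `a` between `ρ` and `ρ'` is at most `ε`. -/
def prohorovLE {Z : Type*} [MetricSpace Z] [MeasurableSpace Z]
    (a ε : ℝ) (ρ ρ' : Measure Z) : Prop :=
  ∀ B : Set Z, MeasurableSet B →
    ρ' B ≤ ρ (cthickening ε B) + ENNReal.ofReal (a * ε) ∧
    ρ B ≤ ρ' (cthickening ε B) + ENNReal.ofReal (a * ε)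

/-- The Gromov–Prohorov distance with parameter `a` (Definition D3). -/
noncomputable def gromovProhorov {X : Type u} {X' : Type v}
    [MetricSpace X] [MeasurableSpace X] [MetricSpace X'] [MeasurableSpace X']
    (a : ℝ) (μ : Measure X) (μ' : Measure X') : ℝ :=
  sInf {ε : ℝ | 0 < ε ∧ ∃ (Z : Type (max u v)) (_ : MetricSpace Z)
    (_ : MeasurableSpace Z) (_ : BorelSpace Z) (φ : X → Z) (φ' : X' → Z),
    Isometry φ ∧ Isometry φ' ∧ prohorovLE a ε (μ.map φ) (μ'.map φ')}

open Finset Function ProbabilityTheory Filter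
open scoped ENNReal Topology

section Transport

variable {I J : Type*} [Fintype I] [Fintype J]

theorem exists_nat_transport_of_injective {n : I → ℕ} {m : J → ℕ} {E : I → J → Prop}
    (f : (Σ i, Fin (n i)) → Σ j, Fin (m j)) (hf : Injective f) (hfE : ∀ l, E l.1 (f l).1) :
    ∃ F : I → J → ℕ, (∀ i j, F i j ≠ 0 → E i j) ∧ (∀ i, ∑ j, F i j = n i) ∧
      ∀ j, ∑ i, F i j ≤ m j := by
  classical
  refine ⟨fun i j => #{k : Fin (n i) | (f ⟨i, k⟩).1 = j}, fun i j h => ?_, fun i => ?_,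
    fun j => ?_⟩
  · obtain ⟨k, hk⟩ := card_ne_zero.1 h
    exact (mem_filter.1 hk).2 ▸ hfE ⟨i, k⟩
  · simpa using (card_eq_sum_card_fiberwise (s := univ) (t := univ)
      (f := fun k : Fin (n i) => (f ⟨i, k⟩).1) fun _ _ => mem_univ _).symm
  · calc ∑ i, #{k : Fin (n i) | (f ⟨i, k⟩).1 = j}
        = #(univ.sigma fun i => ({k : Fin (n i) | (f ⟨i, k⟩).1 = j} : Finset _)) :=
          (card_sigma _ _).symm
      _ ≤ #(univ.map (Embedding.sigmaMk (β := fun j => Fin (m j)) j)) := by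
          refine card_le_card_of_injOn f (fun l hl => ?_) hf.injOn
          obtain ⟨⟨j', k'⟩, hr⟩ : ∃ r, f l = r := ⟨_, rfl⟩
          obtain rfl : j' = j := by simpa [hr] using hl
          simp [hr]
      _ = m j := by simp

theorem exists_nat_transport_of_hall (n : I → ℕ) (m : J → ℕ) (E : I → J → Prop)
    (hall : ∀ (K : Finset I) (N : Finset J), (∀ i ∈ K, ∀ j, E i j → j ∈ N) →
      ∑ i ∈ K, n i ≤ ∑ j ∈ N, m j) :
    ∃ F : I → J → ℕ, (∀ i j, F i j ≠ 0 → E i j) ∧ (∀ i, ∑ j, F i j = n i) ∧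
      ∀ j, ∑ i, F i j ≤ m j := by
  classical
  -- Hall's theorem for the graph in which source `i` and target `j` are blown up into `n i`
  -- and `m j` copies
  let t : (Σ i, Fin (n i)) → Finset (Σ j, Fin (m j)) := fun l => {r | E l.1 r.1}
  have ht : ∀ s, #s ≤ #(s.biUnion t) := by
    intro s
    let K := s.image Sigma.fst
    let N : Finset J := {j | ∃ i ∈ K, E i j}
    calc #s ≤ #(K.sigma fun i => (univ : Finset (Fin (n i)))) :=
          card_le_card fun l hl => mem_sigma.2 ⟨mem_image_of_mem _ hl, mem_univ _⟩
      _ = ∑ i ∈ K, n i := by simp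
      _ ≤ ∑ j ∈ N, m j := hall K N fun i hi j hij => mem_filter.2 ⟨mem_univ _, i, hi, hij⟩
      _ = #(N.sigma fun j => (univ : Finset (Fin (m j)))) := by simp
      _ ≤ #(s.biUnion t) := card_le_card fun r hr => ?_
    obtain ⟨i, ⟨k, hk⟩, hij⟩ : ∃ i, (∃ k, ⟨i, k⟩ ∈ s) ∧ E i r.1 := by simpa [N, K] using hr
    exact mem_biUnion.2 ⟨⟨i, k⟩, hk, by simpa [t] using hij⟩
  obtain ⟨f, hf, hft⟩ := (all_card_le_biUnion_card_iff_exists_injective t).1 ht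
  exact exists_nat_transport_of_injective f hf fun l => by simpa [t] using hft l

theorem exists_nat_transport_of_hall_add (n : I → ℕ) (m : J → ℕ) (E : I → J → Prop) (D : ℕ)
    (hall : ∀ (K : Finset I) (N : Finset J), (∀ i ∈ K, ∀ j, E i j → j ∈ N) →
      ∑ i ∈ K, n i ≤ ∑ j ∈ N, m j + D) :
    ∃ F : I → J → ℕ, (∀ i j, F i j ≠ 0 → E i j) ∧ (∀ i, ∑ j, F i j ≤ n i) ∧
      (∀ j, ∑ i, F i j ≤ m j) ∧ ∑ i, n i ≤ ∑ i, ∑ j, F i j + D := by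
  classical
  -- the deficiency becomes the capacity of a new target `none` adjacent to every source
  have hall' : ∀ (K : Finset I) (N : Finset (Option J)),
      (∀ i ∈ K, ∀ o, o.elim True (E i) → o ∈ N) → ∑ i ∈ K, n i ≤ ∑ o ∈ N, o.elim D m := by
    intro K N hKN
    rcases K.eq_empty_or_nonempty with rfl | ⟨i₀, hi₀⟩
    · simp
    rw [← insert_eq_of_mem (hKN i₀ hi₀ none trivial), ← insertNone_eraseNone, sum_insertNone,
      add_comm]
    exact hall K _ fun i hi j hij => mem_eraseNone.2 (hKN i hi (some j) hij)
  obtain ⟨F, hFE, hFrow, hFcol⟩ :=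
    exists_nat_transport_of_hall n (fun o : Option J => o.elim D m) _ hall'
  have hrow : ∀ i, F i none + ∑ j, F i (some j) = n i := fun i => by
    rw [← hFrow i, Fintype.sum_option]
  refine ⟨fun i j => F i (some j), fun i j => hFE i (some j),
    fun i => hrow i ▸ Nat.le_add_left _ _, fun j => hFcol (some j), ?_⟩
  calc ∑ i, n i = ∑ i, ∑ j, F i (some j) + ∑ i, F i none := by
        rw [← sum_add_distrib]; exact sum_congr rfl fun i _ => by rw [← hrow i, add_comm]
    _ ≤ ∑ i, ∑ j, F i (some j) + D := by gcongr; exact hFcol none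

theorem exists_real_transport_of_hall {u : I → ℝ} {v : J → ℝ} (hu : ∀ i, 0 ≤ u i)
    (hv : ∀ j, 0 ≤ v j) (E : I → J → Prop) {α β : ℝ} (hβ : 0 < β)
    (hall : ∀ (K : Finset I) (N : Finset J), (∀ i ∈ K, ∀ j, E i j → j ∈ N) →
      ∑ i ∈ K, u i ≤ ∑ j ∈ N, v j + α) :
    ∃ w : I → J → ℝ, (∀ i j, 0 ≤ w i j) ∧ (∀ i j, w i j ≠ 0 → E i j) ∧
      (∀ i, ∑ j, w i j ≤ u i) ∧ (∀ j, ∑ i, w i j ≤ v j) ∧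
      ∑ i, u i - α - β ≤ ∑ i, ∑ j, w i j := by
  have hα : 0 ≤ α := by simpa using hall ∅ ∅ (by simp)
  obtain ⟨N, hN⟩ := exists_nat_gt ((Fintype.card I + Fintype.card J + 1 : ℝ) / β)
  have hN0 : (0 : ℝ) < N := (div_pos (by positivity) hβ).trans hN
  rw [div_lt_iff₀ hβ] at hN
  -- rescale by `N` and round; the rounding errors are absorbed into the deficiency
  have hn : ∀ i, (⌊u i * N⌋₊ : ℝ) ≤ u i * N := fun i => Nat.floor_le (by nlinarith [hu i])
  have hm : ∀ j, (⌊v j * N⌋₊ : ℝ) ≤ v j * N := fun j => Nat.floor_le (by nlinarith [hv j])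
  have hD : (⌈α * N⌉₊ : ℝ) < α * N + 1 := Nat.ceil_lt_add_one (by positivity)
  obtain ⟨F, hFE, hFrow, hFcol, hFtot⟩ := exists_nat_transport_of_hall_add
    (fun i => ⌊u i * N⌋₊) (fun j => ⌊v j * N⌋₊) E (Fintype.card J + ⌈α * N⌉₊)
    fun K N' hKN' => by
      have hcard : (#N' : ℝ) ≤ Fintype.card J := by exact_mod_cast card_le_univ _
      suffices h : ∑ i ∈ K, (⌊u i * N⌋₊ : ℝ) ≤
          ∑ j ∈ N', (⌊v j * N⌋₊ : ℝ) + (Fintype.card J + ⌈α * N⌉₊) by exact_mod_cast h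
      calc ∑ i ∈ K, (⌊u i * N⌋₊ : ℝ) ≤ (∑ i ∈ K, u i) * N := by
            rw [sum_mul]; exact sum_le_sum fun i _ => hn i
        _ ≤ (∑ j ∈ N', v j + α) * N := by gcongr; exact hall K N' hKN'
        _ ≤ ∑ j ∈ N', ((⌊v j * N⌋₊ : ℝ) + 1) + α * N := by
            rw [add_mul, sum_mul]; gcongr with j; exact (Nat.lt_floor_add_one _).le
        _ ≤ _ := by rw [sum_add_distrib, sum_const, nsmul_one]; linarith [Nat.le_ceil (α * N)]
  refine ⟨fun i j => F i j / N, fun i j => by positivity,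
    fun i j h => hFE i j fun h0 => h (by simp [h0]), fun i => ?_, fun j => ?_, ?_⟩
  · rw [← sum_div, div_le_iff₀ hN0]
    exact le_trans (by exact_mod_cast hFrow i) (hn i)
  · rw [← sum_div, div_le_iff₀ hN0]
    exact le_trans (by exact_mod_cast hFcol j) (hm j)
  · have hfloor : (∑ i, u i) * N - Fintype.card I ≤ ∑ i, (⌊u i * N⌋₊ : ℝ) := by
      simpa [sum_mul] using
        sum_le_sum fun i (_ : i ∈ univ) => (Nat.sub_one_lt_floor (u i * N)).le
    have htot : ∑ i, (⌊u i * N⌋₊ : ℝ) ≤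
        ∑ i, ∑ j, (F i j : ℝ) + (Fintype.card J + ⌈α * N⌉₊) := by
      exact_mod_cast hFtot
    rw [show ∑ i, ∑ j, (F i j : ℝ) / N = (∑ i, ∑ j, (F i j : ℝ)) / N by simp only [sum_div],
      le_div_iff₀ hN0]
    linarith

end Transport

section Coupling

variable {X X' : Type*} [MeasurableSpace X] [MeasurableSpace X']

lemma MeasureTheory.Measure.inv_measure_univ_smul_smul (ρ : Measure X) [IsFiniteMeasure ρ] :
    (ρ Set.univ)⁻¹ • ρ Set.univ • ρ = ρ := by
  rcases eq_zero_or_neZero ρ with rfl | hρ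
  · simp
  · rw [smul_smul, ENNReal.inv_mul_cancel (Measure.measure_univ_ne_zero.2 hρ.out)
      (measure_ne_top _ _), one_smul]

theorem exists_coupling_ge (μ : Measure X) (μ' : Measure X') [IsProbabilityMeasure μ]
    [IsProbabilityMeasure μ'] {ν₀ : Measure (X × X')} (h₁ : ν₀.map Prod.fst ≤ μ)
    (h₂ : ν₀.map Prod.snd ≤ μ') :
    ∃ ν : Measure (X × X'), ν.map Prod.fst = μ ∧ ν.map Prod.snd = μ' ∧ ν₀ ≤ ν := by
  have : IsFiniteMeasure (ν₀.map Prod.fst) := isFiniteMeasure_of_le μ h₁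
  have : IsFiniteMeasure (ν₀.map Prod.snd) := isFiniteMeasure_of_le μ' h₂
  set ρ := μ - ν₀.map Prod.fst
  set ρ' := μ' - ν₀.map Prod.snd
  have hmass : ρ' Set.univ = ρ Set.univ := by
    simp only [ρ, ρ', Measure.sub_apply MeasurableSet.univ h₁,
      Measure.sub_apply MeasurableSet.univ h₂, Measure.map_apply measurable_fst MeasurableSet.univ,
      Measure.map_apply measurable_snd MeasurableSet.univ, Set.preimage_univ, measure_univ]
  refine ⟨ν₀ + (ρ Set.univ)⁻¹ • ρ.prod ρ', ?_, ?_, Measure.le_add_right le_rfl⟩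
  · rw [Measure.map_add _ _ measurable_fst, Measure.map_smul, Measure.map_fst_prod, hmass,
      Measure.inv_measure_univ_smul_smul, add_comm, Measure.sub_add_cancel_of_le h₁]
  · rw [Measure.map_add _ _ measurable_snd, Measure.map_smul, Measure.map_snd_prod, ← hmass,
      Measure.inv_measure_univ_smul_smul, add_comm, Measure.sub_add_cancel_of_le h₂]

lemma sum_mul_cond_le {ι : Type*} [Fintype ι] (μ : Measure X) [IsFiniteMeasure μ]
    {A : ι → Set X} (hA : ∀ i, MeasurableSet (A i)) (hAd : Pairwise (Disjoint on A))
    {c : ι → ℝ≥0∞} (hc : ∀ i, c i ≤ μ (A i)) {s : Set X} (hs : MeasurableSet s) :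
    ∑ i, c i * μ[s | A i] ≤ μ s :=
  calc ∑ i, c i * μ[s | A i] ≤ ∑ i, μ[s | A i] * μ (A i) :=
        sum_le_sum fun i _ => by rw [mul_comm]; gcongr; exact hc i
    _ = ∑ i, μ (A i ∩ s) := by simp only [cond_mul_eq_inter (hA _)]
    _ = μ (⋃ i, A i ∩ s) := by
        rw [measure_iUnion (fun i j hij => (hAd hij).mono Set.inter_subset_left
          Set.inter_subset_left) fun i => (hA i).inter hs, tsum_fintype]
    _ ≤ μ s := measure_mono (Set.iUnion_subset fun i => Set.inter_subset_right)

variable {I J : Type*} [Fintype I] [Fintype J]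

noncomputable def cellTransport (μ : Measure X) (μ' : Measure X') (A : I → Set X)
    (A' : J → Set X') (w : I → J → ℝ≥0∞) : Measure (X × X') :=
  ∑ i, ∑ j, w i j • (μ[|A i]).prod (μ'[|A' j])

variable {μ : Measure X} {μ' : Measure X'} {A : I → Set X} {A' : J → Set X'} {w : I → J → ℝ≥0∞}

lemma map_fst_cellTransport_le [IsFiniteMeasure μ] (hA : ∀ i, MeasurableSet (A i))
    (hAd : Pairwise (Disjoint on A)) (hrow : ∀ i, ∑ j, w i j ≤ μ (A i)) : (cellTransport μ μ' A A' w).map Prod.fst ≤ μ := by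
  refine Measure.le_iff.2 fun s hs => ?_
  rw [Measure.map_apply measurable_fst hs, ← Set.prod_univ]
  calc cellTransport μ μ' A A' w (s ×ˢ Set.univ)
      = ∑ i, ∑ j, w i j * (μ[s | A i] * μ'[Set.univ | A' j]) := by
        simp [cellTransport, Measure.prod_prod]
    _ ≤ ∑ i, (∑ j, w i j) * μ[s | A i] := by
        simp only [sum_mul]
        gcongr
        exact mul_le_of_le_one_right' prob_le_one
    _ ≤ μ s := sum_mul_cond_le μ hA hAd hrow hs

lemma map_snd_cellTransport_le [IsFiniteMeasure μ'] (hA' : ∀ j, MeasurableSet (A' j))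
    (hA'd : Pairwise (Disjoint on A')) (hcol : ∀ j, ∑ i, w i j ≤ μ' (A' j)) :
    (cellTransport μ μ' A A' w).map Prod.snd ≤ μ' := by
  refine Measure.le_iff.2 fun s hs => ?_
  rw [Measure.map_apply measurable_snd hs, ← Set.univ_prod]
  calc cellTransport μ μ' A A' w (Set.univ ×ˢ s)
      = ∑ i, ∑ j, w i j * (μ[Set.univ | A i] * μ'[s | A' j]) := by
        simp [cellTransport, Measure.prod_prod]
    _ ≤ ∑ j, (∑ i, w i j) * μ'[s | A' j] := by
        rw [sum_comm]
        simp only [sum_mul]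
        gcongr
        exact mul_le_of_le_one_left' prob_le_one
    _ ≤ μ' s := sum_mul_cond_le μ' hA' hA'd hcol hs

lemma sum_le_cellTransport_apply [IsFiniteMeasure μ] [IsFiniteMeasure μ']
    (hrow : ∀ i, ∑ j, w i j ≤ μ (A i)) (hcol : ∀ j, ∑ i, w i j ≤ μ' (A' j)) {R : Set (X × X')}
    (hR : ∀ i j, w i j ≠ 0 → A i ×ˢ A' j ⊆ R) :
    ∑ i, ∑ j, w i j ≤ cellTransport μ μ' A A' w R := by
  simp only [cellTransport, Measure.coe_finsetSum, Finset.sum_apply, Measure.smul_apply,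
    smul_eq_mul]
  gcongr with i _ j _
  by_cases hw : w i j = 0
  · simp [hw]
  have hμ : μ (A i) ≠ 0 :=
    ne_bot_of_le_ne_bot hw ((single_le_sum (fun _ _ => zero_le) (mem_univ j)).trans (hrow i))
  have hμ' : μ' (A' j) ≠ 0 := ne_bot_of_le_ne_bot hw
    ((single_le_sum (f := fun i => w i j) (fun _ _ => zero_le) (mem_univ i)).trans (hcol j))
  calc w i j = w i j * ((μ[|A i]).prod (μ'[|A' j]) (A i ×ˢ A' j)) := by
        rw [Measure.prod_prod, cond_apply_self hμ (measure_ne_top _ _),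
          cond_apply_self hμ' (measure_ne_top _ _), mul_one, mul_one]
    _ ≤ _ := by gcongr; exact hR i j hw

theorem exists_coupling_of_hall (μ : Measure X) (μ' : Measure X') [IsProbabilityMeasure μ]
    [IsProbabilityMeasure μ'] (hA : ∀ i, MeasurableSet (A i)) (hA' : ∀ j, MeasurableSet (A' j))
    (hAd : Pairwise (Disjoint on A)) (hA'd : Pairwise (Disjoint on A')) (E : I → J → Prop)
    {R : Set (X × X')} (hR : ∀ i j, E i j → A i ×ˢ A' j ⊆ R) {α β : ℝ} (hβ : 0 < β)
    (hall : ∀ (K : Finset I) (N : Finset J), (∀ i ∈ K, ∀ j, E i j → j ∈ N) →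
      ∑ i ∈ K, μ.real (A i) ≤ ∑ j ∈ N, μ'.real (A' j) + α) :
    ∃ ν : Measure (X × X'), ν.map Prod.fst = μ ∧ ν.map Prod.snd = μ' ∧
      ENNReal.ofReal (∑ i, μ.real (A i) - α - β) ≤ ν R := by
  obtain ⟨w, hw0, hwE, hwrow, hwcol, hwtot⟩ := exists_real_transport_of_hall
    (fun _ => measureReal_nonneg) (fun _ => measureReal_nonneg) E hβ hall
  set W : I → J → ℝ≥0∞ := fun i j => ENNReal.ofReal (w i j)
  have hrow : ∀ i, ∑ j, W i j ≤ μ (A i) := fun i => by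
    rw [← ENNReal.ofReal_sum_of_nonneg fun j _ => hw0 i j, ← ofReal_measureReal]
    exact ENNReal.ofReal_le_ofReal (hwrow i)
  have hcol : ∀ j, ∑ i, W i j ≤ μ' (A' j) := fun j => by
    rw [← ENNReal.ofReal_sum_of_nonneg fun i _ => hw0 i j, ← ofReal_measureReal]
    exact ENNReal.ofReal_le_ofReal (hwcol j)
  obtain ⟨ν, hν₁, hν₂, hν⟩ := exists_coupling_ge μ μ' (map_fst_cellTransport_le hA hAd hrow)
    (map_snd_cellTransport_le hA' hA'd hcol)
  refine ⟨ν, hν₁, hν₂, ?_⟩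
  calc ENNReal.ofReal (∑ i, μ.real (A i) - α - β) ≤ ENNReal.ofReal (∑ i, ∑ j, w i j) :=
        ENNReal.ofReal_le_ofReal hwtot
    _ = ∑ i, ∑ j, W i j := by
        rw [ENNReal.ofReal_sum_of_nonneg fun i _ => sum_nonneg fun j _ => hw0 i j]
        exact sum_congr rfl fun i _ => ENNReal.ofReal_sum_of_nonneg fun j _ => hw0 i j
    _ ≤ cellTransport μ μ' A A' W R :=
        sum_le_cellTransport_apply hrow hcol fun i j h =>
          hR i j (hwE i j fun h0 => h (by simp [W, h0]))
    _ ≤ ν R := hν R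

end Coupling

theorem exists_fin_partition_diam_le (X : Type*) [PseudoMetricSpace X]
    [TopologicalSpace.SeparableSpace X] [MeasurableSpace X] [OpensMeasurableSpace X]
    (μ : Measure X) [IsProbabilityMeasure μ] {r σ : ℝ} (hr : 0 < r) (hσ : 0 < σ) :
    ∃ (M : ℕ) (A : Fin M → Set X), (∀ i, MeasurableSet (A i)) ∧ Pairwise (Disjoint on A) ∧
      (∀ i, ∀ x ∈ A i, ∀ y ∈ A i, dist x y ≤ r) ∧ 1 - σ ≤ μ.real (⋃ i, A i) := by
  obtain ⟨As, hAs, hbdd, hdiam, hcover, hdisj⟩ :=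
    SeparableSpace.exists_measurable_partition_diam_le X hr
  have hlim : Tendsto (fun n => μ.real (Set.accumulate As n)) atTop (𝓝 1) := by
    have := tendsto_measure_iUnion_accumulate (μ := μ) (f := As)
    rw [hcover, measure_univ] at this
    exact (ENNReal.tendsto_toReal ENNReal.one_ne_top).comp this
  obtain ⟨n, hn⟩ := (hlim.eventually (eventually_gt_nhds (by linarith : 1 - σ < 1))).exists
  refine ⟨n + 1, fun i => As i, fun i => hAs i, fun i j hij => hdisj (Fin.val_injective.ne hij),
    fun i x hx y hy => (dist_le_diam_of_mem (hbdd i) hx hy).trans (hdiam i), hn.le.trans ?_⟩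
  refine measureReal_mono fun x hx => ?_
  obtain ⟨k, hk, hxk⟩ := Set.mem_accumulate.1 hx
  exact Set.mem_iUnion.2 ⟨⟨k, Nat.lt_succ_of_le hk⟩, hxk⟩

theorem measureReal_le_sum_add_of_prohorov {X X' Z : Type*} [MeasurableSpace X]
    [MeasurableSpace X'] [PseudoMetricSpace Z] [MeasurableSpace Z] [OpensMeasurableSpace Z]
    {μ : Measure X} {μ' : Measure X'} [IsFiniteMeasure μ] [IsProbabilityMeasure μ']
    {f : X → Z} {f' : X' → Z} (hf : Measurable f) (hf' : Measurable f') {δ η c σ : ℝ}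
    (hδ : 0 ≤ δ) (hη : 0 < η) (hc : 0 ≤ c)
    (hP : ∀ B, MeasurableSet B → μ.map f B ≤ μ'.map f' (cthickening δ B) + ENNReal.ofReal c)
    {J : Type*} [Fintype J] {A' : J → Set X'} (hA' : ∀ j, MeasurableSet (A' j))
    (hA'd : Pairwise (Disjoint on A')) (htail : 1 - σ ≤ μ'.real (⋃ j, A' j))
    {S : Set X} {N : Finset J}
    (hN : ∀ x ∈ S, ∀ j, ∀ x' ∈ A' j, dist (f x) (f' x') < δ + η → j ∈ N) :
    μ.real S ≤ ∑ j ∈ N, μ'.real (A' j) + c + σ := by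
  set B := closure (f '' S)
  have hsub : f' ⁻¹' cthickening δ B ⊆ (⋃ j ∈ N, A' j) ∪ (⋃ j, A' j)ᶜ := by
    intro x' hx'
    by_cases hcov : x' ∈ ⋃ j, A' j
    · obtain ⟨j, hj⟩ := Set.mem_iUnion.1 hcov
      rw [Set.mem_preimage, cthickening_closure] at hx'
      obtain ⟨_, ⟨x, hx, rfl⟩, hd⟩ := mem_thickening_iff.1
        (cthickening_subset_thickening' (δ₂ := δ + η) (by linarith) (by linarith) _ hx')
      exact Or.inl (Set.mem_biUnion (hN x hx j x' hj (by rwa [dist_comm])) hj)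
    · exact Or.inr hcov
  have hPB := ENNReal.toReal_le_add (hP B isClosed_closure.measurableSet) (measure_ne_top _ _)
    ENNReal.ofReal_ne_top
  rw [← measureReal_def, ← measureReal_def, map_measureReal_apply hf isClosed_closure.measurableSet,
    map_measureReal_apply hf' isClosed_cthickening.measurableSet, ENNReal.toReal_ofReal hc] at hPB
  calc μ.real S ≤ μ.real (f ⁻¹' B) := measureReal_mono fun x hx => subset_closure ⟨x, hx, rfl⟩
    _ ≤ μ'.real (f' ⁻¹' cthickening δ B) + c := hPB
    _ ≤ μ'.real (⋃ j ∈ N, A' j) + μ'.real (⋃ j, A' j)ᶜ + c := by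
        gcongr
        exact (measureReal_mono hsub).trans (measureReal_union_le _ _)
    _ = ∑ j ∈ N, μ'.real (A' j) + (1 - μ'.real (⋃ j, A' j)) + c := by
        rw [measureReal_biUnion_finset (fun i _ j _ hij => hA'd hij) fun j _ => hA' j,
          measureReal_compl (MeasurableSet.iUnion hA'), probReal_univ]
    _ ≤ _ := by linarith

theorem exists_isometry_of_distortion_le {X : Type u} {X' : Type v} [MetricSpace X]
    [MetricSpace X'] (R : Set (X × X')) {ε : ℝ} (hε : 0 < ε)
    (hR : ∀ p ∈ R, ∀ q ∈ R, |dist p.1 q.1 - dist p.2 q.2| ≤ ε) :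
    ∃ (Z : Type (max u v)) (_ : MetricSpace Z) (φ : X → Z) (φ' : X' → Z),
      Isometry φ ∧ Isometry φ' ∧ ∀ p ∈ R, dist (φ p.1) (φ' p.2) ≤ ε / 2 := by
  rcases R.eq_empty_or_nonempty with rfl | hne
  · exact ⟨X ⊕ X', metricSpaceSum, Sum.inl, Sum.inr, isometry_inl, isometry_inr, by simp⟩
  have : Nonempty R := hne.to_subtype
  have H : ∀ p q : R, |dist (p.1.1) (q.1.1) - dist p.1.2 q.1.2| ≤ 2 * (ε / 2) :=
    fun p q => by simpa only [two_mul, add_halves] using hR p p.2 q q.2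
  let M : MetricSpace (X ⊕ X') := glueMetricApprox (fun p : R => p.1.1) (fun p : R => p.1.2)
    (ε / 2) (half_pos hε) H
  have hinl : Isometry (Sum.inl : X → X ⊕ X') := Isometry.of_dist_eq fun _ _ => rfl
  have hinr : Isometry (Sum.inr : X' → X ⊕ X') := Isometry.of_dist_eq fun _ _ => rfl
  have hg : ∀ p ∈ R, dist (Sum.inl p.1 : X ⊕ X') (Sum.inr p.2) ≤ ε / 2 := fun p hp =>
    (glueDist_glued_points (fun p : R => p.1.1) (fun p : R => p.1.2) (ε / 2) ⟨p, hp⟩).le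
  exact ⟨X ⊕ X', M, Sum.inl, Sum.inr, hinl, hinr, hg⟩

theorem prohorovLE_map_of_coupling {X X' Z : Type*} [MeasurableSpace X] [MeasurableSpace X']
    [MetricSpace Z] [MeasurableSpace Z] [OpensMeasurableSpace Z] {μ : Measure X}
    {μ' : Measure X'} {ν : Measure (X × X')} (hν₁ : ν.map Prod.fst = μ)
    (hν₂ : ν.map Prod.snd = μ') {φ : X → Z} {φ' : X' → Z} (hφ : Measurable φ)
    (hφ' : Measurable φ') {R : Set (X × X')} {a ε : ℝ} (hRc : ν Rᶜ ≤ ENNReal.ofReal (a * ε))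
    (hR : ∀ p ∈ R, dist (φ p.1) (φ' p.2) ≤ ε) :
    prohorovLE a ε (μ.map φ) (μ'.map φ') := by
  have key : ∀ T T' : Set (X × X'), T ∩ R ⊆ T' → ν T ≤ ν T' + ENNReal.ofReal (a * ε) :=
    fun T T' h => (measure_le_inter_add_sdiff ν T R).trans
      (add_le_add (measure_mono h) ((measure_mono fun p hp => hp.2).trans hRc))
  intro B hB
  have hB' := (isClosed_cthickening (δ := ε) (E := B)).measurableSet
  subst hν₁ hν₂
  simp only [Measure.map_map hφ measurable_fst, Measure.map_map hφ' measurable_snd,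
    Measure.map_apply (hφ.comp measurable_fst) hB', Measure.map_apply (hφ'.comp measurable_snd) hB',
    Measure.map_apply (hφ.comp measurable_fst) hB, Measure.map_apply (hφ'.comp measurable_snd) hB]
  constructor
  · exact key _ _ fun p ⟨hp, hpR⟩ => mem_cthickening_of_dist_le _ _ _ _ hp (hR p hpR)
  · exact key _ _ fun p ⟨hp, hpR⟩ =>
      mem_cthickening_of_dist_le _ _ _ _ hp ((dist_comm _ _).trans_le (hR p hpR))

lemma abs_dist_sub_dist_le_of_isometry {X X' Z : Type*} [MetricSpace X] [MetricSpace X']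
    [MetricSpace Z] {φ : X → Z} {φ' : X' → Z} (hφ : Isometry φ) (hφ' : Isometry φ')
    (x y : X) (x' y' : X') :
    |dist x y - dist x' y'| ≤ dist (φ x) (φ' x') + dist (φ y) (φ' y') := by
  rw [← hφ.dist_eq, ← hφ'.dist_eq, ← Real.dist_eq]
  exact dist_dist_dist_le _ _ _ _

theorem exists_coupling_of_prohorovLE {X X' : Type*} [MetricSpace X]
    [TopologicalSpace.SeparableSpace X] [MeasurableSpace X] [BorelSpace X] [MetricSpace X']
    [TopologicalSpace.SeparableSpace X'] [MeasurableSpace X'] [BorelSpace X']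
    (μ : Measure X) (μ' : Measure X') [IsProbabilityMeasure μ] [IsProbabilityMeasure μ']
    {Z : Type*} [MetricSpace Z] [MeasurableSpace Z] [BorelSpace Z] {φ : X → Z}
    {φ' : X' → Z} (hφ : Isometry φ) (hφ' : Isometry φ') {a δ ζ : ℝ} (ha : 0 < a) (hδ : 0 < δ)
    (hζ : 0 < ζ) (hP : prohorovLE (2 * a) δ (μ.map φ) (μ'.map φ')) :
    ∃ (R : Set (X × X')) (ν : Measure (X × X')), MeasurableSet R ∧ IsProbabilityMeasure ν ∧
      ν.map Prod.fst = μ ∧ ν.map Prod.snd = μ' ∧ 1 - ENNReal.ofReal (a * (2 * δ + ζ)) ≤ ν R ∧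
      ∀ p ∈ R, ∀ q ∈ R, |dist p.1 q.1 - dist p.2 q.2| ≤ 2 * δ + ζ := by
  set R : Set (X × X') := {p | dist (φ p.1) (φ' p.2) ≤ δ + ζ / 2}
  have hRm : MeasurableSet R :=
    (isClosed_le ((hφ.continuous.comp continuous_fst).dist (hφ'.continuous.comp continuous_snd))
      continuous_const).measurableSet
  set σ := a * ζ / 4 with hσ_def
  have hσ : 0 < σ := by positivity
  obtain ⟨M, A, hA, hAd, hAdiam, hAmass⟩ :=
    exists_fin_partition_diam_le X μ (r := ζ / 8) (by positivity) hσ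
  obtain ⟨M', A', hA', hA'd, hA'diam, hA'mass⟩ :=
    exists_fin_partition_diam_le X' μ' (r := ζ / 8) (by positivity) hσ
  -- two cell diameters `ζ / 8` plus the slack `ζ / 4` in `E` make up the `ζ / 2` allowed in `R`
  let E : Fin M → Fin M' → Prop := fun i j => ∃ x ∈ A i, ∃ x' ∈ A' j, dist (φ x) (φ' x') < δ + ζ / 4
  have hall : ∀ (K : Finset (Fin M)) (N : Finset (Fin M')), (∀ i ∈ K, ∀ j, E i j → j ∈ N) →
      ∑ i ∈ K, μ.real (A i) ≤ ∑ j ∈ N, μ'.real (A' j) + (2 * a * δ + σ) := by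
    intro K N hKN
    rw [← measureReal_biUnion_finset (fun i _ j _ hij => hAd hij) fun i _ => hA i, ← add_assoc]
    refine measureReal_le_sum_add_of_prohorov hφ.continuous.measurable hφ'.continuous.measurable
      hδ.le (η := ζ / 4) (by positivity) (by positivity) (fun B hB => (hP B hB).2) hA' hA'd
      hA'mass fun x hx j x' hx' hd => ?_
    obtain ⟨i, hi, hxi⟩ := Set.mem_iUnion₂.1 hx
    exact hKN i hi j ⟨x, hxi, x', hx', hd⟩
  have hrect : ∀ i j, E i j → A i ×ˢ A' j ⊆ R := by
    rintro i j ⟨x₀, hx₀, x₀', hx₀', hd⟩ ⟨x, x'⟩ ⟨hx, hx'⟩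
    have h₁ := hAdiam i x hx x₀ hx₀
    have h₂ := hA'diam j x₀' hx₀' x' hx'
    calc dist (φ x) (φ' x')
        ≤ dist (φ x) (φ x₀) + dist (φ x₀) (φ' x₀') + dist (φ' x₀') (φ' x') := dist_triangle4 ..
      _ ≤ δ + ζ / 2 := by rw [hφ.dist_eq, hφ'.dist_eq]; linarith
  obtain ⟨ν, hν₁, hν₂, hνR⟩ := exists_coupling_of_hall μ μ' hA hA' hAd hA'd E hrect hσ hall
  have : IsProbabilityMeasure (ν.map Prod.fst) := hν₁ ▸ inferInstance
  refine ⟨R, ν, hRm, Measure.isProbabilityMeasure_of_map Prod.fst, hν₁, hν₂, ?_,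
    fun p hp q hq => (abs_dist_sub_dist_le_of_isometry hφ hφ' _ _ _ _).trans ?_⟩
  · have hcells : 1 - σ ≤ ∑ i, μ.real (A i) := by rwa [← measureReal_iUnion_fintype hAd hA]
    calc 1 - ENNReal.ofReal (a * (2 * δ + ζ)) = ENNReal.ofReal (1 - a * (2 * δ + ζ)) := by
          rw [ENNReal.ofReal_sub 1 (by positivity), ENNReal.ofReal_one]
      _ ≤ ENNReal.ofReal (∑ i, μ.real (A i) - (2 * a * δ + σ) - σ) :=
          ENNReal.ofReal_le_ofReal (by linarith)
      _ ≤ ν R := hνR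
  · linarith [hp.out, hq.out]

theorem exists_prohorovLE_of_box {X : Type u} {X' : Type v} [MetricSpace X] [MeasurableSpace X]
    [OpensMeasurableSpace X] [MetricSpace X'] [MeasurableSpace X'] [OpensMeasurableSpace X']
    {μ : Measure X} {μ' : Measure X'} {a ε : ℝ}
    (hε : 0 < ε) {R : Set (X × X')} {ν : Measure (X × X')} (hR : MeasurableSet R)
    [IsProbabilityMeasure ν] (hν₁ : ν.map Prod.fst = μ) (hν₂ : ν.map Prod.snd = μ')
    (hmass : 1 - ENNReal.ofReal (a * ε) ≤ ν R)
    (hdist : ∀ p ∈ R, ∀ q ∈ R, |dist p.1 q.1 - dist p.2 q.2| ≤ ε) :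
    ∃ (Z : Type (max u v)) (_ : MetricSpace Z) (_ : MeasurableSpace Z) (_ : BorelSpace Z)
      (φ : X → Z) (φ' : X' → Z), Isometry φ ∧ Isometry φ' ∧
        prohorovLE (2 * a) (ε / 2) (μ.map φ) (μ'.map φ') := by
  obtain ⟨Z, _, φ, φ', hφ, hφ', hRφ⟩ := exists_isometry_of_distortion_le R hε hdist
  borelize Z
  refine ⟨Z, _, _, inferInstance, φ, φ', hφ, hφ', prohorovLE_map_of_coupling hν₁ hν₂
    hφ.continuous.measurable hφ'.continuous.measurable ?_ hRφ⟩
  rw [measure_compl hR (measure_ne_top _ _), measure_univ, show 2 * a * (ε / 2) = a * ε by ring]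
  exact tsub_le_iff_tsub_le.1 hmass

theorem csInf_eq_mul_csInf {S T : Set ℝ} {c : ℝ} (hc : 0 < c) (hS : S.Nonempty)
    (hSb : BddBelow S) (hTb : BddBelow T) (hST : ∀ x ∈ S, x / c ∈ T)
    (hTS : ∀ y ∈ T, ∀ ζ > 0, c * y + ζ ∈ S) : sInf S = c * sInf T := by
  obtain ⟨x₀, hx₀⟩ := hS
  apply le_antisymm
  · rw [← div_le_iff₀' hc]
    refine le_csInf ⟨_, hST x₀ hx₀⟩ fun y hy => ?_
    rw [div_le_iff₀' hc]
    exact le_of_forall_pos_le_add fun ζ hζ => csInf_le hSb (hTS y hy ζ hζ)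
  · refine le_csInf ⟨x₀, hx₀⟩ fun x hx => ?_
    rw [← le_div_iff₀' hc]
    exact csInf_le hTb (hST x hx)

theorem stmt7_general {X : Type u} {X' : Type v}
    [MetricSpace X] [TopologicalSpace.SeparableSpace X]
    [MeasurableSpace X] [BorelSpace X]
    [MetricSpace X'] [TopologicalSpace.SeparableSpace X']
    [MeasurableSpace X'] [BorelSpace X']
    (μ : Measure X) (μ' : Measure X')
    [IsProbabilityMeasure μ] [IsProbabilityMeasure μ']
    (a : ℝ) (ha : 0 < a) :
    boxDist a μ μ' = 2 * gromovProhorov (2 * a) μ μ' := by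
  refine csInf_eq_mul_csInf two_pos ?_ ⟨0, fun _ h => h.1.le⟩ ⟨0, fun _ h => h.1.le⟩ ?_ ?_
  · exact ⟨1 / a, by positivity, ∅, μ.prod μ', .empty, inferInstance, by simp, by simp,
      by simp [ha.ne'], by simp⟩
  · rintro ε ⟨hε, R, ν, hR, hν, hν₁, hν₂, hmass, hdist⟩
    exact ⟨by positivity, exists_prohorovLE_of_box hε hR hν₁ hν₂ hmass hdist⟩
  · rintro δ ⟨hδ, Z, _, _, _, φ, φ', hφ, hφ', hP⟩ ζ hζ
    exact ⟨by positivity, exists_coupling_of_prohorovLE μ μ' hφ hφ' ha hδ hζ hP⟩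

/-- `□_a(X,X') = 2 d_GP^{2a}(X,X')`. -/
theorem stmt7 {X : Type u} {X' : Type v}
    [MetricSpace X] [CompleteSpace X] [TopologicalSpace.SeparableSpace X]
    [MeasurableSpace X] [BorelSpace X]
    [MetricSpace X'] [CompleteSpace X'] [TopologicalSpace.SeparableSpace X']
    [MeasurableSpace X'] [BorelSpace X']
    (μ : Measure X) (μ' : Measure X')
    [IsProbabilityMeasure μ] [IsProbabilityMeasure μ']
    (a : ℝ) (ha : 0 < a) :
    boxDist a μ μ' = 2 * gromovProhorov (2 * a) μ μ' :=
  stmt7_general μ μ' a ha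
end
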